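/- arXiv:0910.1306 — 4 statements merged into one kernel-verified Lean document; each statement's English description precedes it below -/
import Mathlib

section
/- Commutativity of the bicategorical trace: Let B be a bicategory with a shadow ⟦−⟧, let (M, M∨, η_M, ε_M) and (N, N∨, η_N, ε_N) be dual pairs with M, N : R → S, and let f : M → N and g : N → M be 2-cells. Then tr(g ∘ f) = tr(f ∘ g) as morphisms ⟦U_R⟧ → ⟦U_S⟧, where g ∘ f : M → M is regarded as a 2-cell U_R ⊙ M → M ⊙ U_S via the unitors and traced with respect to (M, M∨), and similarly f ∘ g with respect to (N, N∨). -/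
/-!
The trace of an endomorphism `φ` of `M` is `⟦η ≫ φ ▷ M∨⟧ ≫ θ ≫ ⟦ε⟧`, and naturality of `θ` lets a
2-cell whiskered onto one factor of the coevaluation slide across `θ` onto the other factor of the
evaluation. The conjugate `f∨ : N∨ ⟶ M∨` of `f` satisfies `η_N ≫ N ◁ f∨ = η_M ≫ f ▷ M∨` and
`f∨ ▷ M ≫ ε_M = N∨ ◁ f ≫ ε_N`. Starting from `tr(g ∘ f)`, slide `g` across `θ`, trade `f` for `f∨`,
slide `f∨` across, trade it back for `f`, and slide `g ∘ f` back: the result is `tr(f ∘ g)`.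
-/

open CategoryTheory Category Bicategory

universe w v u w' v' u' v₁ u₁ v₂ u₂

/-- The data of a candidate dual pair in a bicategory (horizontal composition written in
diagrammatic order): 1-cells `M : R ⟶ S` and `Mv : S ⟶ R` together with a coevaluation
`η : 𝟙 R ⟶ M ≫ Mv` and an evaluation `ε : Mv ≫ M ⟶ 𝟙 S`. -/
structure BicatDualData {B : Type u} [Bicategory.{w, v} B] (R S : B) where
  M : R ⟶ S
  Mv : S ⟶ R
  η : 𝟙 R ⟶ M ≫ Mv
  eps : Mv ≫ M ⟶ 𝟙 S

/-- The two triangle identities, saying that `(M, Mv, η, ε)` is a dual pair, i.e. that `M`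
is right dualizable with right dual `Mv`. -/
def BicatDualData.IsDualPair {B : Type u} [Bicategory.{w, v} B] {R S : B}
    (D : BicatDualData R S) : Prop :=
  ((λ_ D.M).inv ≫ (D.η ▷ D.M) ≫ (α_ D.M D.Mv D.M).hom ≫ (D.M ◁ D.eps) ≫ (ρ_ D.M).hom
      = 𝟙 D.M) ∧
  ((ρ_ D.Mv).inv ≫ (D.Mv ◁ D.η) ≫ (α_ D.Mv D.M D.Mv).inv ≫ (D.eps ▷ D.Mv) ≫ (λ_ D.Mv).hom
      = 𝟙 D.Mv)

/-- A shadow on a bicategory `B` with values in a category `V`: functors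
`⟦-⟧ : B(R,R) ⥤ V` for every 0-cell `R`, together with natural isomorphisms
`θ_{M,N} : ⟦M ≫ N⟧ ≅ ⟦N ≫ M⟧` satisfying the hexagon and unit axioms. -/
structure Shadow (B : Type u) [Bicategory.{w, v} B] (V : Type u₁) [Category.{v₁} V] where
  sh : ∀ R : B, (R ⟶ R) ⥤ V
  θ : ∀ {R S : B} (M : R ⟶ S) (N : S ⟶ R), (sh R).obj (M ≫ N) ≅ (sh S).obj (N ≫ M)
  θ_natural : ∀ {R S : B} {M M' : R ⟶ S} {N N' : S ⟶ R} (f : M ⟶ M') (g : N ⟶ N'),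
    (sh R).map (f ▷ N ≫ M' ◁ g) ≫ (θ M' N').hom
      = (θ M N).hom ≫ (sh S).map (g ▷ M ≫ N' ◁ f)
  hexagon : ∀ {R S T : B} (M : R ⟶ S) (N : S ⟶ T) (P : T ⟶ R),
    (θ (M ≫ N) P).hom ≫ (sh T).map (α_ P M N).inv
      = (sh R).map (α_ M N P).hom ≫ (θ M (N ≫ P)).hom ≫ (sh S).map (α_ N P M).hom ≫
          (θ N (P ≫ M)).hom
  unit_right : ∀ {R : B} (M : R ⟶ R),
    (θ M (𝟙 R)).hom ≫ (sh R).map (λ_ M).hom = (sh R).map (ρ_ M).hom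
  unit_left : ∀ {R : B} (M : R ⟶ R),
    (θ (𝟙 R) M).hom ≫ (sh R).map (ρ_ M).hom = (sh R).map (λ_ M).hom

/-- The bicategorical trace of a 2-cell `f : Q ≫ M ⟶ M ≫ P` (`Q : R ⟶ R`, `P : S ⟶ S`)
with respect to a (candidate) dual pair `(M, Mv, η, ε)`, relative to a shadow: the composite
`⟦Q⟧ ≅ ⟦Q ⊙ U_R⟧ → ⟦Q ⊙ (M ⊙ M∨)⟧ ≅ ⟦(Q ⊙ M) ⊙ M∨⟧ → ⟦(M ⊙ P) ⊙ M∨⟧ ≅θ ⟦M∨ ⊙ (M ⊙ P)⟧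
≅ ⟦(M∨ ⊙ M) ⊙ P⟧ → ⟦U_S ⊙ P⟧ ≅ ⟦P⟧`. -/
def btrace {B : Type u} [Bicategory.{w, v} B] {V : Type u₁} [Category.{v₁} V]
    (sh : Shadow B V) {R S : B} (D : BicatDualData R S) {Q : R ⟶ R} {P : S ⟶ S}
    (f : Q ≫ D.M ⟶ D.M ≫ P) : (sh.sh R).obj Q ⟶ (sh.sh S).obj P :=
  (sh.sh R).map ((ρ_ Q).inv ≫ (Q ◁ D.η) ≫ (α_ Q D.M D.Mv).inv ≫ (f ▷ D.Mv)) ≫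
    (sh.θ (D.M ≫ P) D.Mv).hom ≫
    (sh.sh S).map ((α_ D.Mv D.M P).inv ≫ (D.eps ▷ P) ≫ (λ_ P).hom)

namespace BicatDualData.IsDualPair

variable {B : Type u} [Bicategory.{w, v} B] {R S : B} {D : BicatDualData R S}

def adjunction (hD : D.IsDualPair) : D.M ⊣ D.Mv where
  unit := D.η
  counit := D.eps
  left_triangle := by
    calc leftZigzag D.η D.eps
        = (λ_ D.M).hom ≫ ((λ_ D.M).inv ≫ D.η ▷ D.M ≫ (α_ D.M D.Mv D.M).hom ≫
            D.M ◁ D.eps ≫ (ρ_ D.M).hom) ≫ (ρ_ D.M).inv := by bicategory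
      _ = _ := by rw [hD.1, id_comp]
  right_triangle := by
    calc rightZigzag D.η D.eps
        = (ρ_ D.Mv).hom ≫ ((ρ_ D.Mv).inv ≫ D.Mv ◁ D.η ≫ (α_ D.Mv D.M D.Mv).inv ≫
            D.eps ▷ D.Mv ≫ (λ_ D.Mv).hom) ≫ (λ_ D.Mv).inv := by bicategory
      _ = _ := by rw [hD.2, id_comp]

end BicatDualData.IsDualPair

section Conjugate

variable {B : Type u} [Bicategory.{w, v} B] {c d : B} {l₁ l₂ : c ⟶ d} {r₁ r₂ : d ⟶ c}
  (adj₁ : l₁ ⊣ r₁) (adj₂ : l₂ ⊣ r₂)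

theorem unit_comp_whiskerLeft_conjugateEquiv (α : l₂ ⟶ l₁) :
    adj₁.unit ≫ l₁ ◁ conjugateEquiv adj₁ adj₂ α = adj₂.unit ≫ α ▷ r₂ := by
  rw [conjugateEquiv_apply']
  calc
    _ = 𝟙 _ ⊗≫ (adj₁.unit ▷ 𝟙 c ≫ (l₁ ≫ r₁) ◁ adj₂.unit) ⊗≫ l₁ ◁ r₁ ◁ α ▷ r₂ ⊗≫
          (l₁ ◁ adj₁.counit) ▷ r₂ ⊗≫ 𝟙 _ := by
      bicategory
    _ = 𝟙 _ ⊗≫ adj₂.unit ⊗≫ (adj₁.unit ▷ (l₂ ≫ r₂) ≫ (l₁ ≫ r₁) ◁ α ▷ r₂) ⊗≫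
          (l₁ ◁ adj₁.counit) ▷ r₂ ⊗≫ 𝟙 _ := by
      rw [← whisker_exchange]; bicategory
    _ = 𝟙 _ ⊗≫ adj₂.unit ⊗≫ α ▷ r₂ ⊗≫ leftZigzag adj₁.unit adj₁.counit ▷ r₂ ⊗≫ 𝟙 _ := by
      rw [← whisker_exchange]; bicategory
    _ = adj₂.unit ≫ α ▷ r₂ := by
      rw [adj₁.left_triangle]; bicategory

theorem whiskerRight_conjugateEquiv_comp_counit (α : l₂ ⟶ l₁) :
    conjugateEquiv adj₁ adj₂ α ▷ l₂ ≫ adj₂.counit = r₁ ◁ α ≫ adj₁.counit := by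
  rw [conjugateEquiv_apply']
  calc
    _ = 𝟙 _ ⊗≫ r₁ ◁ adj₂.unit ▷ l₂ ⊗≫ (r₁ ◁ α) ▷ (r₂ ≫ l₂) ⊗≫
          (adj₁.counit ▷ (r₂ ≫ l₂) ≫ 𝟙 d ◁ adj₂.counit) ⊗≫ 𝟙 (𝟙 d) := by
      bicategory
    _ = 𝟙 _ ⊗≫ r₁ ◁ adj₂.unit ▷ l₂ ⊗≫ ((r₁ ◁ α) ▷ (r₂ ≫ l₂) ≫ (r₁ ≫ l₁) ◁ adj₂.counit) ⊗≫
          adj₁.counit := by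
      rw [← whisker_exchange adj₁.counit adj₂.counit]; bicategory
    _ = 𝟙 _ ⊗≫ r₁ ◁ leftZigzag adj₂.unit adj₂.counit ⊗≫ r₁ ◁ α ⊗≫ adj₁.counit := by
      rw [← whisker_exchange (r₁ ◁ α) adj₂.counit]; bicategory
    _ = r₁ ◁ α ≫ adj₁.counit := by
      rw [adj₂.left_triangle]; bicategory

end Conjugate

namespace Shadow

variable {B : Type u} [Bicategory.{w, v} B] {V : Type u₁} [Category.{v₁} V] (sh : Shadow B V)
  {R S : B}

theorem map_whiskerRight_comp_θ_hom {X X' : R ⟶ S} (u : X ⟶ X') (Y : S ⟶ R) :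
    (sh.sh R).map (u ▷ Y) ≫ (sh.θ X' Y).hom = (sh.θ X Y).hom ≫ (sh.sh S).map (Y ◁ u) := by
  simpa using sh.θ_natural u (𝟙 Y)

theorem map_whiskerLeft_comp_θ_hom (X : R ⟶ S) {Y Y' : S ⟶ R} (v : Y ⟶ Y') :
    (sh.sh R).map (X ◁ v) ≫ (sh.θ X Y').hom = (sh.θ X Y).hom ≫ (sh.sh S).map (v ▷ X) := by
  simpa using sh.θ_natural (𝟙 X) v

variable {Q : R ⟶ R} {P : S ⟶ S}

theorem map_comp_whiskerRight_θ_hom_map {X X' : R ⟶ S} {Y : S ⟶ R} (a : Q ⟶ X ≫ Y) (u : X ⟶ X')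
    (b : Y ≫ X' ⟶ P) :
    (sh.sh R).map (a ≫ u ▷ Y) ≫ (sh.θ X' Y).hom ≫ (sh.sh S).map b
      = (sh.sh R).map a ≫ (sh.θ X Y).hom ≫ (sh.sh S).map (Y ◁ u ≫ b) := by
  rw [Functor.map_comp, Functor.map_comp, assoc, reassoc_of% map_whiskerRight_comp_θ_hom]

theorem map_comp_whiskerLeft_θ_hom_map {X : R ⟶ S} {Y Y' : S ⟶ R} (a : Q ⟶ X ≫ Y) (v : Y ⟶ Y')
    (b : Y' ≫ X ⟶ P) :
    (sh.sh R).map (a ≫ X ◁ v) ≫ (sh.θ X Y').hom ≫ (sh.sh S).map b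
      = (sh.sh R).map a ≫ (sh.θ X Y).hom ≫ (sh.sh S).map (v ▷ X ≫ b) := by
  rw [Functor.map_comp, Functor.map_comp, assoc, reassoc_of% map_whiskerLeft_comp_θ_hom]

end Shadow

theorem btrace_leftUnitor_hom_comp_rightUnitor_inv {B : Type u} [Bicategory.{w, v} B]
    {V : Type u₁} [Category.{v₁} V] (sh : Shadow B V) {R S : B} (D : BicatDualData R S)
    (φ : D.M ⟶ D.M) :
    btrace sh D ((λ_ D.M).hom ≫ φ ≫ (ρ_ D.M).inv)
      = (sh.sh R).map (D.η ≫ φ ▷ D.Mv) ≫ (sh.θ D.M D.Mv).hom ≫ (sh.sh S).map D.eps := by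
  have hunit : (ρ_ (𝟙 R)).inv ≫ 𝟙 R ◁ D.η ≫ (α_ (𝟙 R) D.M D.Mv).inv ≫
        ((λ_ D.M).hom ≫ φ ≫ (ρ_ D.M).inv) ▷ D.Mv
      = (D.η ≫ φ ▷ D.Mv) ≫ (ρ_ D.M).inv ▷ D.Mv := by
    bicategory
  have hcounit : (α_ D.Mv D.M (𝟙 S)).inv ≫ D.eps ▷ 𝟙 S ≫ (λ_ (𝟙 S)).hom
      = D.Mv ◁ (ρ_ D.M).hom ≫ D.eps := by
    bicategory
  rw [btrace, hunit, hcounit, sh.map_comp_whiskerRight_θ_hom_map, ← whiskerLeft_comp_assoc,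
    Iso.inv_hom_id, whiskerLeft_id, id_comp]

/-- Commutativity of the bicategorical trace: for dual pairs `(M, M∨)` and `(N, N∨)` with
`M, N : R ⟶ S` and 2-cells `f : M ⟶ N`, `g : N ⟶ M`, one has `tr(g ∘ f) = tr(f ∘ g)` as
morphisms `⟦U_R⟧ ⟶ ⟦U_S⟧`, where `g ∘ f` is regarded as a 2-cell `U_R ⊙ M ⟶ M ⊙ U_S`
via the unitors and traced with respect to `(M, M∨)`, and similarly for `f ∘ g`. -/
theorem btrace_comm {B : Type u} [Bicategory.{w, v} B] {V : Type u₁}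
    [Category.{v₁} V] (sh : Shadow B V) {R S : B}
    (DM DN : BicatDualData R S) (hM : DM.IsDualPair) (hN : DN.IsDualPair)
    (f : DM.M ⟶ DN.M) (g : DN.M ⟶ DM.M) :
    btrace sh DM ((λ_ DM.M).hom ≫ (f ≫ g) ≫ (ρ_ DM.M).inv)
      = btrace sh DN ((λ_ DN.M).hom ≫ (g ≫ f) ≫ (ρ_ DN.M).inv) := by
  set fv := conjugateEquiv hN.adjunction hM.adjunction f
  have hunit : DN.η ≫ DN.M ◁ fv = DM.η ≫ f ▷ DM.Mv :=
    unit_comp_whiskerLeft_conjugateEquiv hN.adjunction hM.adjunction f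
  have hcounit : fv ▷ DM.M ≫ DM.eps = DN.Mv ◁ f ≫ DN.eps :=
    whiskerRight_conjugateEquiv_comp_counit hN.adjunction hM.adjunction f
  rw [btrace_leftUnitor_hom_comp_rightUnitor_inv, btrace_leftUnitor_hom_comp_rightUnitor_inv]
  calc _ = (sh.sh R).map (DM.η ≫ f ▷ DM.Mv) ≫ (sh.θ DN.M DM.Mv).hom ≫
          (sh.sh S).map (DM.Mv ◁ g ≫ DM.eps) := by
        rw [comp_whiskerRight, ← assoc DM.η, sh.map_comp_whiskerRight_θ_hom_map]
    _ = (sh.sh R).map DN.η ≫ (sh.θ DN.M DN.Mv).hom ≫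
          (sh.sh S).map (fv ▷ DN.M ≫ DM.Mv ◁ g ≫ DM.eps) := by
        rw [← hunit, sh.map_comp_whiskerLeft_θ_hom_map]
    _ = (sh.sh R).map DN.η ≫ (sh.θ DN.M DN.Mv).hom ≫
          (sh.sh S).map (DN.Mv ◁ (g ≫ f) ≫ DN.eps) := by
        rw [← whisker_exchange_assoc, hcounit, whiskerLeft_comp, assoc]
    _ = _ := by
        rw [sh.map_comp_whiskerRight_θ_hom_map]
end

section
/- The trace of a mate: Let B be a bicategory with a shadow ⟦−⟧, let (M, M∨, η, ε) be a dual pair with M : R → S, and let f : Q ⊙ M → M ⊙ P be a 2-cell (Q : R → R, P : S → S). Let f∨ : M∨ ⊙ Q → P ⊙ M∨ be the mate of f, namely the composite M∨ ⊙ Q → M∨ ⊙ Q ⊙ (M ⊙ M∨) → M∨ ⊙ (M ⊙ P) ⊙ M∨ → (U_S ⊙ P) ⊙ M∨ ≅ P ⊙ M∨ given by whiskerings of η, f, and ε (with structural isomorphisms inserted). Then tr(f) = tr′(f∨) : ⟦Q⟧ → ⟦P⟧, where tr′(f∨) denotes the left-dual trace: the composite ⟦Q⟧ ≅ ⟦U_R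 ⊙ Q⟧ → ⟦(M ⊙ M∨) ⊙ Q⟧ ≅ ⟦M ⊙ (M∨ ⊙ Q)⟧ → ⟦M ⊙ (P ⊙ M∨)⟧ →θ_{M, P⊙M∨} ⟦(P ⊙ M∨) ⊙ M⟧ ≅ ⟦P ⊙ (M∨ ⊙ M)⟧ → ⟦P ⊙ U_S⟧ ≅ ⟦P⟧ given by whiskerings of η, f∨, and ε. -/
open CategoryTheory Category Bicategory

universe w v u w' v' u' v₁ u₁ v₂ u₂

/-- The mate `f∨ : M∨ ⊙ Q ⟶ P ⊙ M∨` of a 2-cell `f : Q ⊙ M ⟶ M ⊙ P`, given by the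
composite `M∨ ⊙ Q ⟶ M∨ ⊙ Q ⊙ (M ⊙ M∨) ⟶ M∨ ⊙ (M ⊙ P) ⊙ M∨ ⟶ (U_S ⊙ P) ⊙ M∨ ≅ P ⊙ M∨`
via whiskerings of `η`, `f`, and `ε` (structural isomorphisms inserted). -/
def bimate {B : Type u} [Bicategory.{w, v} B] {R S : B} (D : BicatDualData R S)
    {Q : R ⟶ R} {P : S ⟶ S} (f : Q ≫ D.M ⟶ D.M ≫ P) : D.Mv ≫ Q ⟶ P ≫ D.Mv :=
  (ρ_ (D.Mv ≫ Q)).inv ≫ ((D.Mv ≫ Q) ◁ D.η) ≫ (α_ (D.Mv ≫ Q) D.M D.Mv).inv ≫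
    ((α_ D.Mv Q D.M).hom ▷ D.Mv) ≫ ((D.Mv ◁ f) ▷ D.Mv) ≫
    ((α_ D.Mv D.M P).inv ▷ D.Mv) ≫ ((D.eps ▷ P) ▷ D.Mv) ≫ ((λ_ P).hom ▷ D.Mv)

/-!
Both traces have the form `⟦g⟧ ≫ θ_{M, P ⊙ M∨} ≫ ⟦…⟧` for a 2-cell `g : Q ⟶ M ⊙ (P ⊙ M∨)`,
once the evaluation in `tr(f)` is moved from the left of `P` to its right: in the shadow this is
the hexagon axiom, naturality of `θ` and the unit axiom. What remains is the 2-cell identity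
`η ▷ Q ≫ M ◁ f∨ = Q ◁ η ≫ f ▷ M∨` (up to structural isomorphisms), which after the interchange
law is the zigzag identity for `M`.
-/

namespace Shadow

variable {B : Type u} [Bicategory.{w, v} B] {V : Type u₁} [Category.{v₁} V] (sh : Shadow B V)

lemma map_whiskerLeft_comp_θ_hom_s13 {R S : B} (M : R ⟶ S) {N N' : S ⟶ R} (g : N ⟶ N') :
    (sh.sh R).map (M ◁ g) ≫ (sh.θ M N').hom = (sh.θ M N).hom ≫ (sh.sh S).map (g ▷ M) := by
  simpa using sh.θ_natural (𝟙 M) g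

lemma θ_hom_comp_map_whiskerRight_counit {R S : B} (M : R ⟶ S) (P : S ⟶ S) (N : S ⟶ R)
    (e : N ≫ M ⟶ 𝟙 S) :
    (sh.θ (M ≫ P) N).hom ≫ (sh.sh S).map ((α_ N M P).inv ≫ e ▷ P ≫ (λ_ P).hom)
      = (sh.sh R).map (α_ M P N).hom ≫ (sh.θ M (P ≫ N)).hom ≫
          (sh.sh S).map ((α_ P N M).hom ≫ P ◁ e ≫ (ρ_ P).hom) := by
  simp only [Functor.map_comp]
  rw [reassoc_of% sh.hexagon M P N, ← reassoc_of% sh.map_whiskerLeft_comp_θ_hom_s13 P e,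
    sh.unit_right]

end Shadow

lemma BicatDualData.coevaluation_whiskerLeft_bimate {B : Type u} [Bicategory.{w, v} B]
    {R S : B} (D : BicatDualData R S)
    (hM : (λ_ D.M).inv ≫ D.η ▷ D.M ≫ (α_ D.M D.Mv D.M).hom ≫ D.M ◁ D.eps ≫ (ρ_ D.M).hom
      = 𝟙 D.M)
    {Q : R ⟶ R} {P : S ⟶ S} (f : Q ≫ D.M ⟶ D.M ≫ P) :
    (λ_ Q).inv ≫ D.η ▷ Q ≫ (α_ D.M D.Mv Q).hom ≫ D.M ◁ bimate D f
      = (ρ_ Q).inv ≫ Q ◁ D.η ≫ (α_ Q D.M D.Mv).inv ≫ f ▷ D.Mv ≫ (α_ D.M P D.Mv).hom := by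
  set g := (ρ_ Q).inv ≫ Q ◁ D.η ≫ (α_ Q D.M D.Mv).inv ≫ f ▷ D.Mv ≫ (α_ D.M P D.Mv).hom
  calc (λ_ Q).inv ≫ D.η ▷ Q ≫ (α_ D.M D.Mv Q).hom ≫ D.M ◁ bimate D f
      = (λ_ Q).inv ≫ D.η ▷ Q ≫ (D.M ≫ D.Mv) ◁ g ≫
          (α_ D.M D.Mv (D.M ≫ P ≫ D.Mv)).hom ≫ D.M ◁ (α_ D.Mv D.M (P ≫ D.Mv)).inv ≫
          D.M ◁ D.eps ▷ (P ≫ D.Mv) ≫ D.M ◁ (λ_ (P ≫ D.Mv)).hom := by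
        simp only [g, bimate]; bicategory
    _ = (λ_ Q).inv ≫ 𝟙 R ◁ g ≫ D.η ▷ (D.M ≫ P ≫ D.Mv) ≫
          (α_ D.M D.Mv (D.M ≫ P ≫ D.Mv)).hom ≫ D.M ◁ (α_ D.Mv D.M (P ≫ D.Mv)).inv ≫
          D.M ◁ D.eps ▷ (P ≫ D.Mv) ≫ D.M ◁ (λ_ (P ≫ D.Mv)).hom := by
        rw [← whisker_exchange_assoc]
    _ = g ≫ ((λ_ D.M).inv ≫ D.η ▷ D.M ≫ (α_ D.M D.Mv D.M).hom ≫ D.M ◁ D.eps ≫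
          (ρ_ D.M).hom) ▷ (P ≫ D.Mv) := by
        bicategory
    _ = g := by rw [hM, id_whiskerRight, comp_id]

/-- The trace of a mate: `tr(f) = tr′(f∨)`, where `tr′` denotes the left-dual trace
`⟦Q⟧ ≅ ⟦U_R ⊙ Q⟧ → ⟦(M ⊙ M∨) ⊙ Q⟧ ≅ ⟦M ⊙ (M∨ ⊙ Q)⟧ → ⟦M ⊙ (P ⊙ M∨)⟧ ≅θ ⟦(P ⊙ M∨) ⊙ M⟧
≅ ⟦P ⊙ (M∨ ⊙ M)⟧ → ⟦P ⊙ U_S⟧ ≅ ⟦P⟧`. -/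
theorem btrace_mate {B : Type u} [Bicategory.{w, v} B] {V : Type u₁}
    [Category.{v₁} V] (sh : Shadow B V) {R S : B}
    (D : BicatDualData R S) (hD : D.IsDualPair)
    {Q : R ⟶ R} {P : S ⟶ S} (f : Q ≫ D.M ⟶ D.M ≫ P) :
    btrace sh D f
      = (sh.sh R).map ((λ_ Q).inv ≫ (D.η ▷ Q) ≫ (α_ D.M D.Mv Q).hom ≫
            (D.M ◁ bimate D f)) ≫
          (sh.θ D.M (P ≫ D.Mv)).hom ≫
          (sh.sh S).map ((α_ P D.Mv D.M).hom ≫ (P ◁ D.eps) ≫ (ρ_ P).hom) := by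
  rw [btrace, sh.θ_hom_comp_map_whiskerRight_counit, ← Functor.map_comp_assoc,
    D.coevaluation_whiskerLeft_bimate hD.1]
  simp only [assoc]
end

section
/- Preservation of duals by lax functors of bicategories: Let F : B → C be a lax functor of bicategories, let (M, M∨, η, ε) be a dual pair in B with M : R → S, and assume that the structural 2-cells i_R : U_{F(R)} → F(U_R), i_S : U_{F(S)} → F(U_S), and c_{M,M∨} : F(M) ⊙ F(M∨) → F(M ⊙ M∨) are invertible. Then (F(M), F(M∨)) is a dual pair in C, with coevaluation c_{M,M∨}⁻¹ ∘ F(η) ∘ i_R : U_{F(R)} → F(M) ⊙ F(M∨) and evaluation i_S⁻¹ ∘ F(ε) ∘ c_{M∨,M} : F(M∨) ⊙ F(M) → U_{F(S)}; that is, these two 2-cells satisfy the triangle identities. -/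
open CategoryTheory Category Bicategory

universe w v u w' v' u' v₁ u₁ v₂ u₂

/-- The image duality data of `(M, M∨, η, ε)` under a lax functor `F` whose relevant
structural 2-cells are invertible: the coevaluation is `c_{M,M∨}⁻¹ ∘ F(η) ∘ i_R` and the
evaluation is `i_S⁻¹ ∘ F(ε) ∘ c_{M∨,M}`. -/
noncomputable abbrev laxImage {B : Type u} {C : Type u'} [Bicategory.{w, v} B]
    [Bicategory.{w', v'} C] (F : LaxFunctor B C) {R S : B} (D : BicatDualData R S)
    [IsIso (F.mapId R)] [IsIso (F.mapId S)] [IsIso (F.mapComp D.M D.Mv)] :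
    BicatDualData (F.obj R) (F.obj S) where
  M := F.map D.M
  Mv := F.map D.Mv
  η := F.mapId R ≫ F.map₂ D.η ≫ inv (F.mapComp D.M D.Mv)
  eps := F.mapComp D.Mv D.M ≫ F.map₂ D.eps ≫ inv (F.mapId S)

namespace CategoryTheory.LaxFunctor

variable {B : Type u} {C : Type u'} [Bicategory.{w, v} B] [Bicategory.{w', v'} C]
  (F : LaxFunctor B C)

lemma whiskerLeft_inv_mapId_rightUnitor_hom {R S : B} (M : R ⟶ S) [IsIso (F.mapId S)] :
    F.map M ◁ inv (F.mapId S) ≫ (ρ_ (F.map M)).hom = F.mapComp M (𝟙 S) ≫ F.map₂ (ρ_ M).hom := by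
  rw [F.map₂_rightUnitor_hom, ← Bicategory.whiskerLeft_comp_assoc, IsIso.inv_hom_id,
    Bicategory.whiskerLeft_id, id_comp]

lemma inv_mapId_whiskerRight_leftUnitor_hom {R S : B} (N : S ⟶ R) [IsIso (F.mapId S)] :
    inv (F.mapId S) ▷ F.map N ≫ (λ_ (F.map N)).hom = F.mapComp (𝟙 S) N ≫ F.map₂ (λ_ N).hom := by
  rw [F.map₂_leftUnitor_hom, ← comp_whiskerRight_assoc, IsIso.inv_hom_id,
    id_whiskerRight, id_comp]

/- Lax unitality absorbs `inv (F.mapId S)` into the unitor, and naturality of `mapComp` with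
lax associativity carries `inv (F.mapComp M N)` onto `F.mapComp M N`. -/
lemma left_triangle_eq_map₂ {R S : B} {M : R ⟶ S} {N : S ⟶ R} (η : 𝟙 R ⟶ M ≫ N)
    (eps : N ≫ M ⟶ 𝟙 S) [IsIso (F.mapComp M N)] [IsIso (F.mapId S)] :
    (λ_ (F.map M)).inv ≫ (F.mapId R ≫ F.map₂ η ≫ inv (F.mapComp M N)) ▷ F.map M ≫
        (α_ (F.map M) (F.map N) (F.map M)).hom ≫
        F.map M ◁ (F.mapComp N M ≫ F.map₂ eps ≫ inv (F.mapId S)) ≫ (ρ_ (F.map M)).hom =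
      F.map₂ ((λ_ M).inv ≫ η ▷ M ≫ (α_ M N M).hom ≫ M ◁ eps ≫ (ρ_ M).hom) := by
  simp only [comp_whiskerRight, Bicategory.whiskerLeft_comp, assoc]
  rw [whiskerLeft_inv_mapId_rightUnitor_hom, ← F.mapComp_naturality_right_assoc,
    F.mapComp_assoc_right_assoc, Iso.hom_inv_id_assoc,
    ← comp_whiskerRight_assoc (inv (F.mapComp M N)) (F.mapComp M N),
    IsIso.inv_hom_id, id_whiskerRight, id_comp,
    ← F.mapComp_naturality_left_assoc, ← F.map₂_leftUnitor_assoc]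
  simp only [PrelaxFunctor.map₂_comp]

lemma right_triangle_eq_map₂ {R S : B} {M : R ⟶ S} {N : S ⟶ R} (η : 𝟙 R ⟶ M ≫ N)
    (eps : N ≫ M ⟶ 𝟙 S) [IsIso (F.mapComp M N)] [IsIso (F.mapId S)] :
    (ρ_ (F.map N)).inv ≫ F.map N ◁ (F.mapId R ≫ F.map₂ η ≫ inv (F.mapComp M N)) ≫
        (α_ (F.map N) (F.map M) (F.map N)).inv ≫
        (F.mapComp N M ≫ F.map₂ eps ≫ inv (F.mapId S)) ▷ F.map N ≫ (λ_ (F.map N)).hom =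
      F.map₂ ((ρ_ N).inv ≫ N ◁ η ≫ (α_ N M N).inv ≫ eps ▷ N ≫ (λ_ N).hom) := by
  simp only [comp_whiskerRight, Bicategory.whiskerLeft_comp, assoc]
  rw [inv_mapId_whiskerRight_leftUnitor_hom, ← F.mapComp_naturality_left_assoc,
    F.mapComp_assoc_left_assoc, Iso.inv_hom_id_assoc,
    ← Bicategory.whiskerLeft_comp_assoc (F.map N) (inv (F.mapComp M N)),
    IsIso.inv_hom_id, Bicategory.whiskerLeft_id, id_comp,
    ← F.mapComp_naturality_right_assoc, ← F.map₂_rightUnitor_assoc]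
  simp only [PrelaxFunctor.map₂_comp]

end CategoryTheory.LaxFunctor

/-- Preservation of duals by lax functors of bicategories: if `(M, M∨, η, ε)` is a dual
pair in `B` and the structural 2-cells `i_R`, `i_S`, and `c_{M,M∨}` of the lax functor `F`
are invertible, then `(F M, F M∨)` with coevaluation `c_{M,M∨}⁻¹ ∘ F(η) ∘ i_R` and
evaluation `i_S⁻¹ ∘ F(ε) ∘ c_{M∨,M}` satisfies the triangle identities. -/
theorem laxFunctor_preserves_duals {B : Type u} {C : Type u'} [Bicategory.{w, v} B]
    [Bicategory.{w', v'} C] (F : LaxFunctor B C) {R S : B}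
    (D : BicatDualData R S) (hD : D.IsDualPair)
    [IsIso (F.mapId R)] [IsIso (F.mapId S)] [IsIso (F.mapComp D.M D.Mv)] :
    (laxImage F D).IsDualPair := by
  obtain ⟨hleft, hright⟩ := hD
  exact ⟨by rw [F.left_triangle_eq_map₂, hleft, F.map₂_id],
    by rw [F.right_triangle_eq_map₂, hright, F.map₂_id]⟩
end

section
/- Independence of the bicategorical trace from the choice of dual: Let B be a bicategory with a shadow ⟦−⟧, let M : R → S be a 1-cell, and let (M, M∨, η, ε) and (M, M∨′, η′, ε′) be two dual pairs exhibiting right duals of M. Then for any 2-cell f : Q ⊙ M → M ⊙ P (Q : R → R, P : S → S), the trace of f computed with the dual pair (M, M∨, η, ε) equals the trace of f computed with the dual pair (M, M∨′, η′, ε′), as morphisms ⟦Q⟧ → ⟦P⟧. -/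
open CategoryTheory Category Bicategory

universe w v u w' v' u' v₁ u₁ v₂ u₂

/-!
Two right duals of `M` are compared by the 2-cell `φ : Mv ⟶ Mv'` obtained by pasting `ε` with
`η'`. A triangle identity of each pair shows that `φ` carries `η` to `η'` and `ε'` back to `ε`.
Sliding `φ` through the shadow isomorphism `θ` by naturality then turns one trace into the
other.
-/

namespace Shadow

variable {B : Type u} [Bicategory.{w, v} B] {V : Type u₁} [Category.{v₁} V]

theorem θ_hom_naturality_right (sh : Shadow B V) {R S : B} (M : R ⟶ S) {N N' : S ⟶ R}
    (g : N ⟶ N') :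
    (sh.sh R).map (M ◁ g) ≫ (sh.θ M N').hom = (sh.θ M N).hom ≫ (sh.sh S).map (g ▷ M) := by
  simpa using sh.θ_natural (𝟙 M) g

end Shadow

section DualComparison

variable {B : Type u} [Bicategory.{w, v} B] {R S : B} {M : R ⟶ S} {Mv Mv' : S ⟶ R}

theorem BicatDualData.IsDualPair.leftZigzag_eq {D : BicatDualData R S} (hD : D.IsDualPair) :
    leftZigzag D.η D.eps = (λ_ D.M).hom ≫ (ρ_ D.M).inv := by
  calc leftZigzag D.η D.eps
      = (λ_ D.M).hom ≫ ((λ_ D.M).inv ≫ D.η ▷ D.M ≫ (α_ D.M D.Mv D.M).hom ≫ D.M ◁ D.eps ≫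
          (ρ_ D.M).hom) ≫ (ρ_ D.M).inv := by bicategory
    _ = (λ_ D.M).hom ≫ (ρ_ D.M).inv := by rw [hD.1, id_comp]

def dualComparison (eps : Mv ≫ M ⟶ 𝟙 S) (η' : 𝟙 R ⟶ M ≫ Mv') : Mv ⟶ Mv' :=
  (ρ_ Mv).inv ≫ Mv ◁ η' ≫ (α_ Mv M Mv').inv ≫ eps ▷ Mv' ≫ (λ_ Mv').hom

theorem coev_comp_whiskerLeft_dualComparison {η : 𝟙 R ⟶ M ≫ Mv} {eps : Mv ≫ M ⟶ 𝟙 S}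
    (h : leftZigzag η eps = (λ_ M).hom ≫ (ρ_ M).inv) (η' : 𝟙 R ⟶ M ≫ Mv') :
    η ≫ M ◁ dualComparison eps η' = η' :=
  calc η ≫ M ◁ dualComparison eps η'
      = 𝟙 _ ⊗≫ (𝟙 R ◁ η' ≫ η ▷ (M ≫ Mv')) ⊗≫ M ◁ eps ▷ Mv' ⊗≫ 𝟙 _ := by
        rw [whisker_exchange, dualComparison]; bicategory
    _ = η' ⊗≫ leftZigzag η eps ▷ Mv' ⊗≫ 𝟙 _ := by bicategory
    _ = η' := by rw [h]; bicategory

theorem whiskerRight_dualComparison_comp_ev (eps : Mv ≫ M ⟶ 𝟙 S) {η' : 𝟙 R ⟶ M ≫ Mv'}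
    {eps' : Mv' ≫ M ⟶ 𝟙 S} (h' : leftZigzag η' eps' = (λ_ M).hom ≫ (ρ_ M).inv) :
    dualComparison eps η' ▷ M ≫ eps' = eps :=
  calc dualComparison eps η' ▷ M ≫ eps'
      = 𝟙 _ ⊗≫ Mv ◁ η' ▷ M ⊗≫ ((Mv ≫ M) ◁ eps' ≫ eps ▷ 𝟙 S) ⊗≫ 𝟙 _ := by
        rw [whisker_exchange, dualComparison]; bicategory
    _ = 𝟙 _ ⊗≫ Mv ◁ leftZigzag η' eps' ⊗≫ eps := by bicategory
    _ = eps := by rw [h']; bicategory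

end DualComparison

section TraceInvariance

variable {B : Type u} [Bicategory.{w, v} B] {V : Type u₁} [Category.{v₁} V]
  {R S : B} {M : R ⟶ S} {Mv Mv' : S ⟶ R} {η : 𝟙 R ⟶ M ≫ Mv} {eps : Mv ≫ M ⟶ 𝟙 S}
  {η' : 𝟙 R ⟶ M ≫ Mv'} {eps' : Mv' ≫ M ⟶ 𝟙 S} {Q : R ⟶ R} {P : S ⟶ S}

theorem coevLeg_eq_of_coev_comp_whiskerLeft (φ : Mv ⟶ Mv') (hη : η ≫ M ◁ φ = η')
    (f : Q ≫ M ⟶ M ≫ P) :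
    (ρ_ Q).inv ≫ Q ◁ η' ≫ (α_ Q M Mv').inv ≫ f ▷ Mv'
      = ((ρ_ Q).inv ≫ Q ◁ η ≫ (α_ Q M Mv).inv ≫ f ▷ Mv) ≫ (M ≫ P) ◁ φ := by
  subst hη
  calc (ρ_ Q).inv ≫ Q ◁ (η ≫ M ◁ φ) ≫ (α_ Q M Mv').inv ≫ f ▷ Mv'
      = 𝟙 _ ⊗≫ Q ◁ η ⊗≫ ((Q ≫ M) ◁ φ ≫ f ▷ Mv') ⊗≫ 𝟙 _ := by bicategory
    _ = ((ρ_ Q).inv ≫ Q ◁ η ≫ (α_ Q M Mv).inv ≫ f ▷ Mv) ≫ (M ≫ P) ◁ φ := by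
      rw [whisker_exchange]; bicategory

theorem evLeg_eq_of_whiskerRight_comp_ev (φ : Mv ⟶ Mv') (hε : φ ▷ M ≫ eps' = eps) :
    φ ▷ (M ≫ P) ≫ (α_ Mv' M P).inv ≫ eps' ▷ P ≫ (λ_ P).hom
      = (α_ Mv M P).inv ≫ eps ▷ P ≫ (λ_ P).hom := by
  subst hε
  bicategory

theorem btrace_eq_of_comparison (sh : Shadow B V) (φ : Mv ⟶ Mv') (hη : η ≫ M ◁ φ = η')
    (hε : φ ▷ M ≫ eps' = eps) (f : Q ≫ M ⟶ M ≫ P) :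
    btrace sh ⟨M, Mv, η, eps⟩ f = btrace sh ⟨M, Mv', η', eps'⟩ f := by
  simp only [btrace]
  rw [coevLeg_eq_of_coev_comp_whiskerLeft φ hη, ← evLeg_eq_of_whiskerRight_comp_ev φ hε]
  simp only [Functor.map_comp, assoc]
  rw [reassoc_of% sh.θ_hom_naturality_right (M ≫ P) φ]

end TraceInvariance

/-- Independence of the bicategorical trace from the choice of right dual: if
`(M, Mv, η, ε)` and `(M, Mv', η', ε')` are two dual pairs exhibiting right duals of the
same 1-cell `M : R ⟶ S`, then for any 2-cell `f : Q ⊙ M ⟶ M ⊙ P` the traces computed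
with the two dual pairs agree. -/
theorem btrace_independent_of_dual {B : Type u} [Bicategory.{w, v} B] {V : Type u₁}
    [Category.{v₁} V] (sh : Shadow B V) {R S : B} (M : R ⟶ S) (Mv Mv' : S ⟶ R)
    (η : 𝟙 R ⟶ M ≫ Mv) (eps : Mv ≫ M ⟶ 𝟙 S)
    (η' : 𝟙 R ⟶ M ≫ Mv') (eps' : Mv' ≫ M ⟶ 𝟙 S)
    (h : (⟨M, Mv, η, eps⟩ : BicatDualData R S).IsDualPair)
    (h' : (⟨M, Mv', η', eps'⟩ : BicatDualData R S).IsDualPair)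
    {Q : R ⟶ R} {P : S ⟶ S} (f : Q ≫ M ⟶ M ≫ P) :
    btrace sh ⟨M, Mv, η, eps⟩ f = btrace sh ⟨M, Mv', η', eps'⟩ f :=
  btrace_eq_of_comparison sh (dualComparison eps η')
    (coev_comp_whiskerLeft_dualComparison h.leftZigzag_eq η')
    (whiskerRight_dualComparison_comp_ev eps h'.leftZigzag_eq) f
end
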